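/- arXiv:1806.01253 — 3 statements merged into one kernel-verified Lean document; each statement's English description precedes it below -/
import Mathlib

section
/- Let N ≥ 2, K ≥ 1 be integers and M an integer with 1 ≤ M ≤ K. Fix a real S with 0 ≤ S ≤ M. Define for a vector (r_1,...,r_M) with r_1 ≥ r_2 ≥ ... ≥ r_M, each r_i ∈ [0,1], and Σ r_i = S, the cost D(r) = Σ_{j=0}^{K-1-M} N^{-j} + Σ_{i=1}^{M} (1-r_i) N^{-(K-i)}. Then the uniform vector r_i = S/M for all i minimizes D(r) over all admissible vectors, i.e., for every admissible r, D(r) ≥ D(S/M,...,S/M). -/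
/-- uniform caching minimizes the PIR-PSI cost for fixed M and S. -/
theorem stmt1 (N K M : ℕ) (hN : 2 ≤ N) (hK : 1 ≤ K) (hM1 : 1 ≤ M) (hMK : M ≤ K)
    (S : ℝ) (hS0 : 0 ≤ S) (hSM : S ≤ M)
    (r : ℕ → ℝ)
    (hr01 : ∀ i, 1 ≤ i → i ≤ M → 0 ≤ r i ∧ r i ≤ 1)
    (hrmono : ∀ i j, 1 ≤ i → i ≤ j → j ≤ M → r j ≤ r i)
    (hsum : ∑ i ∈ Finset.Icc 1 M, r i = S) :
    (∑ j ∈ Finset.range (K - M), ((N : ℝ) ^ j)⁻¹)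
      + ∑ i ∈ Finset.range M, (1 - S / M) * ((N : ℝ) ^ (K - (i + 1)))⁻¹
    ≤ (∑ j ∈ Finset.range (K - M), ((N : ℝ) ^ j)⁻¹)
      + ∑ i ∈ Finset.range M, (1 - r (i + 1)) * ((N : ℝ) ^ (K - (i + 1)))⁻¹ := by
  set w : ℕ → ℝ := fun i => ((N : ℝ) ^ (K - (i + 1)))⁻¹ with hw
  have hN1 : (1 : ℝ) ≤ (N : ℝ) := by exact_mod_cast Nat.one_le_of_lt hN
  have hwmono : ∀ i j : ℕ, i ≤ j → w i ≤ w j := by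
    intro i j hij
    apply inv_anti₀
    · positivity
    · exact pow_le_pow_right₀ hN1 (Nat.sub_le_sub_left (by omega) K)
  have hanti : AntivaryOn (fun i => r (i + 1)) w (Finset.range M) := by
    intro i hi j hj hij
    simp only [Finset.coe_range, Set.mem_Iio] at hi hj
    have hij' : i < j := by
      by_contra h
      exact absurd (hwmono j i (by omega)) (not_le.mpr hij)
    exact hrmono (i + 1) (j + 1) (by omega) (by omega) (by omega)
  have hcheb := hanti.card_mul_sum_le_sum_mul_sum
  rw [Finset.card_range] at hcheb
  have hrsum : ∑ i ∈ Finset.range M, r (i + 1) = S := by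
    rw [← hsum, ← Finset.Ico_add_one_right_eq_Icc, Finset.sum_Ico_eq_sum_range]
    simp [add_comm]
  rw [hrsum] at hcheb
  have hMpos : (0 : ℝ) < M := by exact_mod_cast hM1
  have key : ∑ i ∈ Finset.range M, r (i + 1) * w i ≤ S / M * ∑ i ∈ Finset.range M, w i := by
    rw [div_mul_eq_mul_div, le_div_iff₀ hMpos, mul_comm _ (M : ℝ)]
    exact hcheb
  apply add_le_add le_rfl
  have h1 : ∑ i ∈ Finset.range M, (1 - S / M) * w i
      = ∑ i ∈ Finset.range M, w i - S / M * ∑ i ∈ Finset.range M, w i := by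
    rw [Finset.mul_sum, ← Finset.sum_sub_distrib]
    exact Finset.sum_congr rfl fun i _ => by ring
  have h2 : ∑ i ∈ Finset.range M, (1 - r (i + 1)) * w i
      = ∑ i ∈ Finset.range M, w i - ∑ i ∈ Finset.range M, r (i + 1) * w i := by
    rw [← Finset.sum_sub_distrib]
    exact Finset.sum_congr rfl fun i _ => by ring
  rw [h1, h2]
  linarith
end

section
/- Let N ≥ 2 and K ≥ 1 be integers, and let S be a real number with 0 ≤ S. For each integer M with max(1, ⌈S⌉) ≤ M ≤ K, define the uniform-caching cost D*(M) = Σ_{j=0}^{K-1-M} N^{-j} + (1 - S/M) · Σ_{i=K-M}^{K-1} N^{-i}. Then D*(M+1) ≤ D*(M) for all M with ⌈S⌉ ≤ M ≤ K-1; consequently D*(K) ≤ D*(M) for all admissible M. -/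
/-- Uniform-caching cost D*(M) for N databases, K messages, storage S. -/
noncomputable def Dstar (N K : ℕ) (S : ℝ) (M : ℕ) : ℝ :=
  (∑ j ∈ Finset.range (K - M), ((N : ℝ) ^ j)⁻¹)
    + (1 - S / M) * ∑ i ∈ Finset.Icc (K - M) (K - 1), ((N : ℝ) ^ i)⁻¹

lemma step (N K : ℕ) (hN : 2 ≤ N) (S : ℝ) (hS0 : 0 ≤ S) (M : ℕ)
    (hM : ⌈S⌉₊ ≤ M) (hMK : M + 1 ≤ K) :
    Dstar N K S (M + 1) ≤ Dstar N K S M := by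
  have hN1 : (1:ℝ) ≤ (N:ℝ) := by exact_mod_cast Nat.one_le_of_lt hN
  set m := K - (M + 1) with hm
  have hKM : K - M = m + 1 := by omega
  have hm1 : m ≤ K - 1 := by omega
  unfold Dstar
  rw [hKM, Finset.sum_range_succ]
  have hins : Finset.Icc m (K - 1) = insert m (Finset.Icc (m + 1) (K - 1)) := by
    ext x
    simp only [Finset.mem_Icc, Finset.mem_insert]
    omega
  have hnot : m ∉ Finset.Icc (m + 1) (K - 1) := by simp
  rw [hins, Finset.sum_insert hnot]
  set t : ℝ := ((N:ℝ) ^ m)⁻¹ with hta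
  set T : ℝ := ∑ i ∈ Finset.Icc (m + 1) (K - 1), ((N : ℝ) ^ i)⁻¹ with hTa
  have ht0 : (0:ℝ) ≤ t := by positivity
  have hT0 : (0:ℝ) ≤ T := by
    apply Finset.sum_nonneg; intro i _; positivity
  have hcard : (Finset.Icc (m + 1) (K - 1)).card = M := by
    rw [Nat.card_Icc]; omega
  have hT : T ≤ (M : ℝ) * t := by
    have := Finset.sum_le_card_nsmul (Finset.Icc (m + 1) (K - 1))
      (fun i => ((N:ℝ) ^ i)⁻¹) t ?_
    · rw [hcard] at this; simpa [nsmul_eq_mul] using this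
    · intro i hi
      simp only [Finset.mem_Icc] at hi
      apply inv_anti₀ (by positivity)
      exact pow_le_pow_right₀ hN1 (by omega)
  push_cast
  rcases Nat.eq_zero_or_pos M with h0 | hMpos
  · subst h0
    have hS : S = 0 := le_antisymm (Nat.ceil_eq_zero.mp (Nat.le_zero.mp hM)) hS0
    simp only [hS, zero_div, sub_zero, one_mul, hm]
    linarith
  · have hMr : (1:ℝ) ≤ (M:ℝ) := by exact_mod_cast hMpos
    have hMne : (M:ℝ) ≠ 0 := by linarith
    have hM1ne : (M:ℝ) + 1 ≠ 0 := by linarith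
    have hu : S / (M:ℝ) * M = S := div_mul_cancel₀ S hMne
    have hv : S / ((M:ℝ) + 1) * ((M:ℝ) + 1) = S := div_mul_cancel₀ S hM1ne
    have hv0 : 0 ≤ S / ((M:ℝ) + 1) := by positivity
    have hu0 : 0 ≤ S / (M:ℝ) := by positivity
    nlinarith [mul_nonneg hv0 (sub_nonneg.mpr hT), mul_nonneg hv0 hT0,
      mul_nonneg hu0 hT0, mul_nonneg hv0 ht0]

/-- D*(M) is nonincreasing in M, hence D*(K) is smallest. -/
theorem stmt2 (N K : ℕ) (hN : 2 ≤ N) (hK : 1 ≤ K) (S : ℝ) (hS0 : 0 ≤ S) :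
    (∀ M : ℕ, ⌈S⌉₊ ≤ M → M ≤ K - 1 → Dstar N K S (M + 1) ≤ Dstar N K S M) ∧
    (∀ M : ℕ, max 1 ⌈S⌉₊ ≤ M → M ≤ K → Dstar N K S K ≤ Dstar N K S M) := by
  have main : ∀ d M : ℕ, ⌈S⌉₊ ≤ M → M + d ≤ K →
      Dstar N K S (M + d) ≤ Dstar N K S M := by
    intro d
    induction d with
    | zero => intro M _ _; simp
    | succ d ih =>
      intro M hM hMd
      have h1 : Dstar N K S (M + 1 + d) ≤ Dstar N K S (M + 1) :=
        ih (M + 1) (by omega) (by omega)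
      have h2 : Dstar N K S (M + 1) ≤ Dstar N K S M :=
        step N K hN S hS0 M hM (by omega)
      calc Dstar N K S (M + (d + 1)) = Dstar N K S (M + 1 + d) := by ring_nf
        _ ≤ Dstar N K S (M + 1) := h1
        _ ≤ Dstar N K S M := h2
  constructor
  · intro M hM hMK
    exact step N K hN S hS0 M hM (by omega)
  · intro M hM hMK
    have := main (K - M) M (le_of_max_le_right hM) (by omega)
    have hKe : M + (K - M) = K := by omega
    rwa [hKe] at this
end

section
/- For N ≥ 2, K ≥ 1, and real S with 0 ≤ S ≤ K, the minimum over all integers M with max(1,⌈S⌉) ≤ M ≤ K and all ordered vectors r ∈ [0,1]^M with Σ r_i = S of D(M, r) = Σ_{j=0}^{K-1-M} N^{-j} + Σ_{i=1}^{M} (1-r_i) N^{-(K-i)} equals D(K, (S/K,...,S/K)) = (1 - S/K) · Σ_{j=0}^{K-1} N^{-j}. -/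
lemma aux_reflect (f : ℕ → ℝ) {M K : ℕ} (h : M ≤ K) :
    ∑ i ∈ Finset.range M, f (K - (i + 1)) = ∑ j ∈ Finset.Ico (K - M) K, f j := by
  rw [Finset.sum_Ico_eq_sum_range, Nat.sub_sub_self h]
  rw [← Finset.sum_range_reflect (fun i => f (K - (i + 1))) M]
  refine Finset.sum_congr rfl fun i hi => ?_
  rw [Finset.mem_range] at hi
  congr 1
  omega

/-- over all feasible caching schemes, the uniform scheme with
M = K minimizes the PIR-PSI cost, with value (1 - S/K)·Σ_{j=0}^{K-1} N^{-j}. -/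
theorem stmt13 (N K : ℕ) (hN : 2 ≤ N) (hK : 1 ≤ K)
    (S : ℝ) (hS0 : 0 ≤ S) (hSK : S ≤ K) :
    (∀ M : ℕ, max 1 ⌈S⌉₊ ≤ M → M ≤ K → ∀ r : ℕ → ℝ,
      (∀ i, 1 ≤ i → i ≤ M → 0 ≤ r i ∧ r i ≤ 1) →
      (∀ i j, 1 ≤ i → i ≤ j → j ≤ M → r j ≤ r i) →
      (∑ i ∈ Finset.Icc 1 M, r i = S) →
      (1 - S / K) * ∑ j ∈ Finset.range K, ((N : ℝ) ^ j)⁻¹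
        ≤ (∑ j ∈ Finset.range (K - M), ((N : ℝ) ^ j)⁻¹)
          + ∑ i ∈ Finset.range M, (1 - r (i + 1)) * ((N : ℝ) ^ (K - (i + 1)))⁻¹) ∧
    ((∑ j ∈ Finset.range (K - K), ((N : ℝ) ^ j)⁻¹)
      + ∑ i ∈ Finset.range K, (1 - S / K) * ((N : ℝ) ^ (K - (i + 1)))⁻¹
      = (1 - S / K) * ∑ j ∈ Finset.range K, ((N : ℝ) ^ j)⁻¹) := by
  have hN1 : (1 : ℝ) ≤ (N : ℝ) := by exact_mod_cast (by omega : 1 ≤ N)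
  set f : ℕ → ℝ := fun j => ((N : ℝ) ^ j)⁻¹ with hf
  have hfpos : ∀ j, 0 < f j := fun j => by positivity
  have hfanti : ∀ {a b : ℕ}, a ≤ b → f b ≤ f a := by
    intro a b hab
    exact inv_anti₀ (by positivity) (pow_le_pow_right₀ hN1 hab)
  have hKpos : (0 : ℝ) < K := by exact_mod_cast hK
  constructor
  · intro M hM1 hMK r hr01 hrmono hrsum
    have hM1' : 1 ≤ M := le_trans (le_max_left _ _) hM1
    set T := ∑ j ∈ Finset.range K, f j with hT
    set H := ∑ j ∈ Finset.range (K - M), f j with hH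
    set W := ∑ i ∈ Finset.range M, f (K - (i + 1)) with hW
    set P := ∑ i ∈ Finset.range M, r (i + 1) * f (K - (i + 1)) with hP
    have hHW : H + W = T := by
      rw [hW, aux_reflect f hMK, hH, hT]
      simp only [Finset.range_eq_Ico]
      exact Finset.sum_Ico_consecutive f (Nat.zero_le _) (Nat.sub_le K M)
    -- sum of r over range
    have hrsum' : ∑ i ∈ Finset.range M, r (i + 1) = S := by
      rw [← hrsum, ← Finset.Ico_add_one_right_eq_Icc, Finset.sum_Ico_eq_sum_range]
      simp [add_comm]
    -- Chebyshev
    have hanti : AntivaryOn (fun i => r (i + 1)) (fun i => f (K - (i + 1)))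
        (Finset.range M : Finset ℕ) := by
      intro i hi j hj hlt
      simp only [Finset.coe_range, Set.mem_Iio] at hi hj
      have hij : i < j := by
        by_contra h
        exact absurd (hfanti (by omega : K - (i + 1) ≤ K - (j + 1))) (not_le.mpr hlt)
      exact hrmono (i + 1) (j + 1) (by omega) (by omega) (by omega)
    have hcheb : (M : ℝ) * P ≤ S * W := by
      have := hanti.card_mul_sum_le_sum_mul_sum
      simpa [hrsum', hP, hW] using this
    -- W ≤ M * f (K - M)
    have hWle : W ≤ (M : ℝ) * f (K - M) := by
      rw [hW]
      calc ∑ i ∈ Finset.range M, f (K - (i + 1)) ≤ ∑ _i ∈ Finset.range M, f (K - M) :=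
            Finset.sum_le_sum fun i hi => hfanti (by have := Finset.mem_range.mp hi; omega)
        _ = (M : ℝ) * f (K - M) := by simp [mul_comm]
    have hHge : ((K : ℝ) - M) * f (K - M) ≤ H := by
      rw [hH]
      calc ((K : ℝ) - M) * f (K - M) = ∑ _j ∈ Finset.range (K - M), f (K - M) := by
            rw [Finset.sum_const, Finset.card_range, nsmul_eq_mul, Nat.cast_sub hMK]
        _ ≤ ∑ j ∈ Finset.range (K - M), f j :=
            Finset.sum_le_sum fun j hj => hfanti (by
              rw [Finset.mem_range] at hj; omega)
    have hWpos : 0 < W := Finset.sum_pos (fun i _ => hfpos _) (Finset.nonempty_range_iff.mpr (by omega))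
    have hKM : (M : ℝ) ≤ K := by exact_mod_cast hMK
    have hMpos : (0 : ℝ) < M := by exact_mod_cast hM1'
    have hfKM : 0 < f (K - M) := hfpos _
    have hKW : (K : ℝ) * W ≤ (M : ℝ) * T := by nlinarith [hHW]
    have hPT : P * K ≤ S * T := by nlinarith [mul_le_mul_of_nonneg_left hKW hS0]
    have hgoal : P ≤ S / K * T := by
      rw [div_mul_eq_mul_div, le_div_iff₀ hKpos]; linarith
    have hsplit : ∑ i ∈ Finset.range M, (1 - r (i + 1)) * f (K - (i + 1)) = W - P := by
      rw [hW, hP, ← Finset.sum_sub_distrib]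
      exact Finset.sum_congr rfl fun i _ => by ring
    rw [hsplit]
    linarith
  · rw [Nat.sub_self]
    simp only [Finset.range_zero, Finset.sum_empty, zero_add, ← Finset.mul_sum]
    congr 1
    rw [aux_reflect f le_rfl, Nat.sub_self, ← Finset.range_eq_Ico]
end
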